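/- arXiv:1512.04001 — 3 statements merged into one kernel-verified Lean document; each statement's English description precedes it below -/
import Mathlib

section
/- Let A be a nontrivial s-hierarchical ordered group, let On(A) = {x ∈ A : R_s(x) = ∅}, and suppose the order type of ⟨On(A), <⟩ is ω^φ. For an ordinal λ, let A[λ] = {x ∈ A : there exists b ∈ On(A) such that the order type of {c ∈ On(A) : c < b} is < λ and −b < x < b}. Then a subset K ⊆ A is a nontrivial convex subgroup of A that is an initial subtree of ⟨A, <_s⟩ if and only if K = A[λ] for some infinite additively indecomposable ordinal λ ≤ ω^φ (i.e., some λ ≥ ω with μ + ν < λ for all ordinals μ, ν < λ). -/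
universe u

section Tree

variable {α : Type u}

/-- The set of strict tree-predecessors of `x` under the relation `s`. -/
def treePred (s : α → α → Prop) (x : α) : Set α := {y | s y x}

/-- `⟨α, s⟩` is a tree: `s` is a strict partial order each of whose predecessor
sets is well-ordered by `s`. -/
structure IsTreeOrd (s : α → α → Prop) : Prop where
  irrefl : ∀ x, ¬ s x x
  trans : ∀ {x y z}, s x y → s y z → s x z
  predWO : ∀ x : α, IsWellOrder (treePred s x) fun a b => s a.1 b.1

/-- The tree-rank of `x`: the order type of its set of predecessors. -/
noncomputable def treeRank (s : α → α → Prop) (h : IsTreeOrd s) (x : α) : Ordinal :=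
  @Ordinal.type (treePred s x) (fun a b => s a.1 b.1) (h.predWO x)

/-- `y` is an immediate successor of `x`. -/
def IsImmSucc (s : α → α → Prop) (h : IsTreeOrd s) (x y : α) : Prop :=
  s x y ∧ treeRank s h y = treeRank s h x + 1

/-- `C` is a chain (a subclass totally ordered by `s`). -/
def IsTreeChain (s : α → α → Prop) (C : Set α) : Prop :=
  ∀ x ∈ C, ∀ y ∈ C, x ≠ y → s x y ∨ s y x

/-- `C` is a chain of limit length. -/
def IsLimitChain (s : α → α → Prop) (C : Set α) : Prop :=
  IsTreeChain s C ∧ ∃ hwo : IsWellOrder C fun a b => s a.1 b.1,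
    Order.IsSuccLimit (@Ordinal.type C (fun a b => s a.1 b.1) hwo)

/-- `y` is an immediate successor of the chain `C`. -/
def IsChainImmSucc (s : α → α → Prop) (h : IsTreeOrd s) (C : Set α) (y : α) : Prop :=
  (∀ x ∈ C, s x y) ∧
    IsLeast {o : Ordinal | ∀ x ∈ C, treeRank s h x < o} (treeRank s h y)

/-- `⟨α, s⟩` is a binary tree. -/
structure IsBinaryTree (s : α → α → Prop) : Prop where
  toIsTreeOrd : IsTreeOrd s
  succ_binary : ∀ x a b c : α, IsImmSucc s toIsTreeOrd x a → IsImmSucc s toIsTreeOrd x b →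
    IsImmSucc s toIsTreeOrd x c → a = b ∨ a = c ∨ b = c
  chain_succ_unique : ∀ C : Set α, IsLimitChain s C → ∀ y z : α,
    IsChainImmSucc s toIsTreeOrd C y → IsChainImmSucc s toIsTreeOrd C z → y = z

variable [LinearOrder α]

/-- `L_s(x)`: the predecessors of `x` lying below `x`. -/
def Lopts (s : α → α → Prop) (x : α) : Set α := {a | s a x ∧ a < x}

/-- `R_s(x)`: the predecessors of `x` lying above `x`. -/
def Ropts (s : α → α → Prop) (x : α) : Set α := {a | s a x ∧ x < a}

/-- `⟨α, <, s⟩` is a lexicographically ordered binary tree. -/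
structure IsLexBinTree (s : α → α → Prop) : Prop where
  toIsBinaryTree : IsBinaryTree s
  lex : ∀ x y : α, x ≠ y →
    ((¬ s x y ∧ ¬ s y x) ↔ ∃ z, s z x ∧ s z y ∧ (x < z ∧ z < y ∨ y < z ∧ z < x))

/-- `x = {L | R}`: `x` is the simplest element lying between `L` and `R`. -/
def IsSimplest (s : α → α → Prop) (L R : Set α) (x : α) : Prop :=
  (∀ l ∈ L, l < x) ∧ (∀ r ∈ R, x < r) ∧
    ∀ y, y ≠ x → (∀ l ∈ L, l < y) → (∀ r ∈ R, y < r) → s x y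

/-- `B` is an initial subtree: it is closed under `s`-predecessors. -/
def IsInitialSubtree (s : α → α → Prop) (B : Set α) : Prop :=
  ∀ x ∈ B, ∀ y, s y x → y ∈ B

end Tree

/-- s-hierarchical ordered group. -/
structure IsSHGroup (α : Type u) [AddCommGroup α] [LinearOrder α] [IsOrderedAddMonoid α] (s : α → α → Prop) : Prop where
  lexBin : IsLexBinTree s
  add_eq : ∀ x y : α, IsSimplest s
    ({z | ∃ x' ∈ Lopts s x, z = x' + y} ∪ {z | ∃ y' ∈ Lopts s y, z = x + y'})
    ({z | ∃ x'' ∈ Ropts s x, z = x'' + y} ∪ {z | ∃ y'' ∈ Ropts s y, z = x + y''})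
    (x + y)

/-- s-hierarchical ordered domain. -/
structure IsSHDomain (α : Type u) [CommRing α] [LinearOrder α] [IsStrictOrderedRing α] (s : α → α → Prop) : Prop where
  toIsSHGroup : IsSHGroup α s
  mul_eq : ∀ x y : α, IsSimplest s
    ({z | ∃ x' ∈ Lopts s x, ∃ y' ∈ Lopts s y, z = x' * y + x * y' - x' * y'} ∪
     {z | ∃ x'' ∈ Ropts s x, ∃ y'' ∈ Ropts s y, z = x'' * y + x * y'' - x'' * y''})
    ({z | ∃ x' ∈ Lopts s x, ∃ y'' ∈ Ropts s y, z = x' * y + x * y'' - x' * y''} ∪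
     {z | ∃ x'' ∈ Ropts s x, ∃ y' ∈ Lopts s y, z = x'' * y + x * y' - x'' * y'})
    (x * y)

/-- s-hierarchical ordered field. -/
def IsSHField (α : Type u) [Field α] [LinearOrder α] [IsStrictOrderedRing α] (s : α → α → Prop) : Prop :=
  IsSHDomain α s

section Hahn

variable {Γ : Type*} [LinearOrder Γ]

/-- The series `r·t^y` in `ℝ((t^Γ))` (represented with exponents in `Γᵒᵈ`, so that
supports are well-ordered under the reverse order `>` of `Γ`). -/
noncomputable def tpow (y : Γ) (r : ℝ) : HahnSeries Γᵒᵈ ℝ :=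
  HahnSeries.single (OrderDual.toDual y) r

/-- Truncation of a Hahn series at `γ`: keep exactly the coefficients at exponents `> γ`. -/
noncomputable def htrunc (x : HahnSeries Γᵒᵈ ℝ) (γ : Γ) : HahnSeries Γᵒᵈ ℝ where
  coeff g := if γ < OrderDual.ofDual g then x.coeff g else 0
  isPWO_support' := x.isPWO_support.mono (by
    intro g hg
    simp only [Function.mem_support] at hg ⊢
    intro h
    simp [h] at hg)

/-- The leading coefficient of a Hahn series: its coefficient at the greatest
element of its support (`0` for the zero series). -/
noncomputable def leadCoeff (x : HahnSeries Γᵒᵈ ℝ) : ℝ :=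
  letI := Classical.dec (x = 0)
  if h : x = 0 then 0
  else x.coeff (x.isWF_support.min (HahnSeries.support_nonempty_iff.2 h))

/-- A Hahn series is positive iff its leading coefficient is positive. -/
def HahnPos (x : HahnSeries Γᵒᵈ ℝ) : Prop := x ≠ 0 ∧ 0 < leadCoeff x

/-- The order type of the support of a Hahn series, well-ordered by the reverse
order of `Γ`. -/
noncomputable def suppOrderType (x : HahnSeries Γᵒᵈ ℝ) : Ordinal :=
  @Ordinal.type x.support (fun a b => (a : Γᵒᵈ) < (b : Γᵒᵈ))
    { trichotomous := fun a b h1 h2 =>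
        Subtype.ext (le_antisymm (not_lt.1 h2) (not_lt.1 h1))
      wf := x.isWF_support }

end Hahn

/-- The set of dyadic rational real numbers. -/
def Dyadics : Set ℝ := {x | ∃ (z : ℤ) (m : ℕ), x = z / 2 ^ m}

/-- `H` is an initial subgroup of `ℝ`: it is `{0}`, or `{z/2^m : z ∈ ℤ}` for some `m`,
or it contains all dyadic rationals. -/
def IsInitialRealSubgroup (H : Set ℝ) : Prop :=
  H = {0} ∨ (∃ m : ℕ, H = {x : ℝ | ∃ z : ℤ, x = (z : ℝ) / 2 ^ m}) ∨ Dyadics ⊆ H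
/-- `K` is (the carrier of) a subgroup. -/
def IsSubgroupSet {A : Type u} [AddGroup A] (K : Set A) : Prop :=
  0 ∈ K ∧ (∀ x ∈ K, ∀ y ∈ K, x + y ∈ K) ∧ ∀ x ∈ K, -x ∈ K

/-- `K` is an order-convex subset. -/
def IsConvexSet {A : Type u} [Preorder A] (K : Set A) : Prop :=
  ∀ x ∈ K, ∀ y ∈ K, ∀ z, x ≤ z → z ≤ y → z ∈ K
section NaddDef

/-- Natural (Hessenberg) sum of ordinals. -/
noncomputable def Ordinal.nadd : Ordinal.{u} → Ordinal.{u} → Ordinal.{u}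
  | a, b => max (⨆ x : Set.Iio a, Order.succ (Ordinal.nadd x.1 b))
      (⨆ x : Set.Iio b, Order.succ (Ordinal.nadd a x.1))
termination_by a b => (a, b)
decreasing_by
  · exact Prod.Lex.left _ _ x.2
  · exact Prod.Lex.right _ x.2

infixl:65 " ♯ " => Ordinal.nadd

theorem Ordinal.nadd_le_iff {a b c : Ordinal.{u}} :
    a ♯ b ≤ c ↔ (∀ a' < a, a' ♯ b < c) ∧ ∀ b' < b, a ♯ b' < c := by
  rw [Ordinal.nadd, max_le_iff, Ordinal.iSup_le_iff, Ordinal.iSup_le_iff]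
  simp only [Order.succ_le_iff, Subtype.forall, Set.mem_Iio]

theorem Ordinal.nadd_lt_nadd_right {a b : Ordinal.{u}} (h : a < b) (c : Ordinal.{u}) :
    a ♯ c < b ♯ c :=
  (Ordinal.nadd_le_iff.1 le_rfl).1 a h

theorem Ordinal.nadd_lt_nadd_left {b c : Ordinal.{u}} (h : b < c) (a : Ordinal.{u}) :
    a ♯ b < a ♯ c :=
  (Ordinal.nadd_le_iff.1 le_rfl).2 b h

theorem Ordinal.nadd_le_nadd {a b c d : Ordinal.{u}} (h₁ : a ≤ b) (h₂ : c ≤ d) :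
    a ♯ c ≤ b ♯ d := by
  refine le_trans ?_ (?_ : b ♯ c ≤ b ♯ d)
  · rcases h₁.lt_or_eq with h | rfl
    · exact (Ordinal.nadd_lt_nadd_right h c).le
    · exact le_rfl
  · rcases h₂.lt_or_eq with h | rfl
    · exact (Ordinal.nadd_lt_nadd_left h b).le
    · exact le_rfl

theorem Ordinal.nadd_zero (a : Ordinal.{u}) : a ♯ 0 = a := by
  induction a using Ordinal.induction with
  | _ a IH =>
  have h1 : a ♯ 0 ≤ a := by
    rw [Ordinal.nadd_le_iff]
    refine ⟨fun a' ha' => by rw [IH a' ha']; exact ha', fun b' hb' => ?_⟩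
    exact absurd hb' (not_lt_of_ge (zero_le (a := b')))
  refine le_antisymm h1 (not_lt.1 fun hlt => ?_)
  have := Ordinal.nadd_lt_nadd_right hlt 0
  rw [IH _ hlt] at this
  exact lt_irrefl _ this

end NaddDef

section OrdinalAux

open Ordinal Order

private theorem nadd_opow_aux (a : Ordinal)
    (hsmall : ∀ ρ σ : Ordinal, ρ < ω ^ a → σ < ω ^ a → ρ ♯ σ < ω ^ a) :
    ∀ (k : ℕ) (q l : ℕ), q + l = k → ∀ (o : Ordinal) (ρ σ : Ordinal), ρ ♯ σ = o →
      ρ < ω ^ a → σ < ω ^ a →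
      (ω ^ a * q + ρ) ♯ (ω ^ a * l + σ) ≤ ω ^ a * (q + l + 1 : ℕ) + (ρ ♯ σ) := by
  have hω : (ω : Ordinal) ^ a ≠ 0 := opow_ne_zero a omega0_ne_zero
  intro k
  induction k using Nat.strong_induction_on with
  | _ k IHk =>
  intro q l hql o
  induction o using Ordinal.induction with
  | _ o IHo =>
  intro ρ σ ho hρ hσ
  -- decomposition helper
  have decomp : ∀ (m : ℕ) (δ : Ordinal), δ < ω ^ a → ∀ x, x < ω ^ a * m + δ →
      ∃ (m' : ℕ) (δ' : Ordinal), δ' < ω ^ a ∧ x = ω ^ a * m' + δ' ∧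
        (m' < m ∨ (m' = m ∧ δ' < δ)) := by
    intro m δ hδ x hx
    have hx2 : x < ω ^ a * ((m : Ordinal) + 1) := by
      calc x < ω ^ a * m + δ := hx
        _ < ω ^ a * m + ω ^ a := by exact add_lt_add_right hδ _
        _ = ω ^ a * ((m : Ordinal) + 1) := by rw [mul_add_one]
    have hdiv : x / ω ^ a < (m : Ordinal) + 1 := (div_lt hω).2 hx2
    have hdiv' : x / ω ^ a < ω := lt_of_lt_of_le hdiv (by
      rw [← Nat.cast_succ]; exact (nat_lt_omega0 (m+1)).le)
    obtain ⟨m', hm'⟩ := lt_omega0.1 hdiv'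
    have hxeq : x = ω ^ a * m' + x % ω ^ a := by
      rw [← hm', div_add_mod]
    refine ⟨m', x % ω ^ a, mod_lt x hω, hxeq, ?_⟩
    have hm'le : (m' : ℕ) ≤ m := by
      have := hdiv
      rw [hm', ← Nat.cast_succ, Nat.cast_lt] at this
      omega
    rcases lt_or_eq_of_le hm'le with hlt | heq
    · exact Or.inl hlt
    · refine Or.inr ⟨heq, ?_⟩
      subst heq
      have h5 : ω ^ a * m' + x % ω ^ a < ω ^ a * m' + δ := hxeq ▸ hx
      exact (add_lt_add_iff_left _).1 h5
  rw [nadd_le_iff]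
  constructor
  · intro x hx
    obtain ⟨q', ρ', hρ', rfl, hcase⟩ := decomp q ρ hρ x hx
    rcases hcase with hlt | ⟨rfl, hρ'ρ⟩
    · have h1 := IHk (q' + l) (by omega) q' l rfl (ρ' ♯ σ) ρ' σ rfl hρ' hσ
      have h2 : ω ^ a * (q' + l + 1 : ℕ) + (ρ' ♯ σ) < ω ^ a * ((q' + l + 1 : ℕ) + 1 : Ordinal) := by
        rw [mul_add_one]
        exact add_lt_add_right (hsmall ρ' σ hρ' hσ) _
      have h3 : ω ^ a * (((q' + l + 1 : ℕ) : Ordinal) + 1) ≤ ω ^ a * (q + l + 1 : ℕ) := by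
        refine mul_le_mul_right ?_ _
        rw [← Nat.cast_succ]
        exact_mod_cast (by omega : q' + l + 1 + 1 ≤ q + l + 1)
      calc (ω ^ a * q' + ρ') ♯ (ω ^ a * l + σ) ≤ ω ^ a * (q' + l + 1 : ℕ) + (ρ' ♯ σ) := h1
        _ < ω ^ a * (((q' + l + 1 : ℕ) : Ordinal) + 1) := h2
        _ ≤ ω ^ a * (q + l + 1 : ℕ) := h3
        _ ≤ ω ^ a * (q + l + 1 : ℕ) + (ρ ♯ σ) := le_self_add
    · have h1 := IHo (ρ' ♯ σ) (ho ▸ nadd_lt_nadd_right hρ'ρ σ) ρ' σ rfl hρ' hσ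
      exact lt_of_le_of_lt h1 (add_lt_add_right (nadd_lt_nadd_right hρ'ρ σ) _)
  · intro y hy
    obtain ⟨l', σ', hσ', rfl, hcase⟩ := decomp l σ hσ y hy
    rcases hcase with hlt | ⟨rfl, hσ'σ⟩
    · have h1 := IHk (q + l') (by omega) q l' rfl (ρ ♯ σ') ρ σ' rfl hρ hσ'
      have h2 : ω ^ a * (q + l' + 1 : ℕ) + (ρ ♯ σ') < ω ^ a * ((q + l' + 1 : ℕ) + 1 : Ordinal) := by
        rw [mul_add_one]
        exact add_lt_add_right (hsmall ρ σ' hρ hσ') _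
      have h3 : ω ^ a * (((q + l' + 1 : ℕ) : Ordinal) + 1) ≤ ω ^ a * (q + l + 1 : ℕ) := by
        refine mul_le_mul_right ?_ _
        rw [← Nat.cast_succ]
        exact_mod_cast (by omega : q + l' + 1 + 1 ≤ q + l + 1)
      calc (ω ^ a * q + ρ) ♯ (ω ^ a * l' + σ') ≤ ω ^ a * (q + l' + 1 : ℕ) + (ρ ♯ σ') := h1
        _ < ω ^ a * (((q + l' + 1 : ℕ) : Ordinal) + 1) := h2
        _ ≤ ω ^ a * (q + l + 1 : ℕ) := h3
        _ ≤ ω ^ a * (q + l + 1 : ℕ) + (ρ ♯ σ) := le_self_add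
    · have h1 := IHo (ρ ♯ σ') (ho ▸ nadd_lt_nadd_left hσ'σ ρ) ρ σ' rfl hρ hσ'
      exact lt_of_le_of_lt h1 (add_lt_add_right (nadd_lt_nadd_left hσ'σ ρ) _)

private theorem nadd_lt_omega0_opow' {e : Ordinal} : ∀ {μ ν : Ordinal},
    μ < ω ^ e → ν < ω ^ e → μ ♯ ν < ω ^ e := by
  induction e using Ordinal.induction with
  | _ e IH =>
  intro μ ν hμ hν
  rcases eq_or_ne e 0 with rfl | he
  · rw [opow_zero, lt_one_iff_zero] at hμ hν
    subst hμ; subst hν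
    rw [nadd_zero, opow_zero]
    exact zero_lt_one
  · have key : ∀ μ' : Ordinal, μ' < ω ^ e → ∃ a, a < e ∧ ∃ n : ℕ, μ' < ω ^ a * n := by
      intro μ' hμ'
      rcases zero_or_succ_or_isSuccLimit e with rfl | ⟨f, rfl⟩ | hlim
      · exact absurd rfl he
      · refine ⟨f, lt_succ f, ?_⟩
        have hωf : (ω : Ordinal) ^ f ≠ 0 := opow_ne_zero f omega0_ne_zero
        have hdiv : μ' / ω ^ f < ω := by
          rw [div_lt hωf, ← opow_succ]; exact hμ'
        obtain ⟨n, hn⟩ := lt_omega0.1 hdiv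
        refine ⟨n + 1, ?_⟩
        have := lt_mul_succ_div μ' hωf
        rwa [hn, ← add_one_eq_succ, ← Nat.cast_succ] at this
      · obtain ⟨a, ha, hlt⟩ := (lt_opow_of_isSuccLimit omega0_ne_zero hlim).1 hμ'
        exact ⟨a, ha, 1, by rwa [Nat.cast_one, mul_one]⟩
    obtain ⟨a₁, ha₁, n₁, h1⟩ := key μ hμ
    obtain ⟨a₂, ha₂, n₂, h2⟩ := key ν hν
    set a := max a₁ a₂ with hadef
    have hae : a < e := max_lt ha₁ ha₂
    have hμ' : μ < ω ^ a * n₁ :=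
      h1.trans_le (mul_le_mul_left (opow_le_opow_right omega0_pos (le_max_left _ _)) _)
    have hν' : ν < ω ^ a * n₂ :=
      h2.trans_le (mul_le_mul_left (opow_le_opow_right omega0_pos (le_max_right _ _)) _)
    have hpos : (0 : Ordinal) < ω ^ a := opow_pos a omega0_pos
    have big := nadd_opow_aux a (fun ρ σ hρ hσ => IH a hae hρ hσ) (n₁ + n₂) n₁ n₂ rfl
      0 0 0 (by rw [nadd_zero]) hpos hpos
    rw [add_zero, add_zero, nadd_zero, add_zero] at big
    calc μ ♯ ν ≤ (ω ^ a * n₁) ♯ (ω ^ a * n₂) := nadd_le_nadd hμ'.le hν'.le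
      _ ≤ ω ^ a * (n₁ + n₂ + 1 : ℕ) := big
      _ < ω ^ a * ω := mul_lt_mul_of_pos_left (nat_lt_omega0 _) hpos
      _ = ω ^ (a + 1) := by rw [add_one_eq_succ, opow_succ]
      _ ≤ ω ^ e := opow_le_opow_right omega0_pos (by rw [add_one_eq_succ]; exact succ_le_of_lt hae)

private theorem nadd_lt_of_add_principal {lam : Ordinal} (hω : ω ≤ lam)
    (H : ∀ μ' ν' : Ordinal, μ' < lam → ν' < lam → μ' + ν' < lam) {μ ν : Ordinal}
    (hμ : μ < lam) (hν : ν < lam) : μ ♯ ν < lam := by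
  have hp : Ordinal.Principal (· + ·) lam := fun x y hx hy => H x y hx hy
  rcases Ordinal.principal_add_iff_zero_or_omega0_opow.1 hp with rfl | ⟨e, he⟩
  · exact absurd (lt_of_lt_of_le omega0_pos hω) (lt_irrefl 0)
  · rw [← he] at hμ hν ⊢
    exact nadd_lt_omega0_opow' hμ hν

end OrdinalAux


section SHLemmas

variable {A : Type u} [AddCommGroup A] [LinearOrder A] [IsOrderedAddMonoid A] {s : A → A → Prop}

private theorem sh_trans (h : IsSHGroup A s) {x y z : A} (h1 : s x y) (h2 : s y z) : s x z :=
  h.lexBin.toIsBinaryTree.toIsTreeOrd.trans h1 h2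

private theorem sh_irrefl (h : IsSHGroup A s) (x : A) : ¬ s x x :=
  h.lexBin.toIsBinaryTree.toIsTreeOrd.irrefl x

private theorem sh_ne (h : IsSHGroup A s) {x y : A} (hxy : s x y) : x ≠ y := by
  rintro rfl; exact sh_irrefl h x hxy

private theorem sh_wf (h : IsSHGroup A s) : WellFounded s := by
  rw [WellFounded.wellFounded_iff_has_min]
  rintro S ⟨x, hx⟩
  by_cases hc : ∃ y ∈ S, s y x
  · obtain ⟨y₀, hy₀S, hy₀⟩ := hc
    have hwo := (h.lexBin.toIsBinaryTree.toIsTreeOrd.predWO x).wf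
    obtain ⟨m, hmT, hmin⟩ := hwo.has_min {z : treePred s x | z.1 ∈ S} ⟨⟨y₀, hy₀⟩, hy₀S⟩
    exact ⟨m.1, hmT, fun w hw hwm => hmin ⟨w, sh_trans h hwm m.2⟩ hw hwm⟩
  · exact ⟨x, hx, fun w hw hwx => hc ⟨w, hw, hwx⟩⟩

private theorem sh_pred_tri (h : IsSHGroup A s) {x a b : A} (ha : s a x) (hb : s b x) :
    s a b ∨ a = b ∨ s b a := by
  rcases (haveI := h.lexBin.toIsBinaryTree.toIsTreeOrd.predWO x
    trichotomous (r := fun a b : treePred s x => s a.1 b.1) ⟨a, ha⟩ ⟨b, hb⟩) with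
    h1 | h1 | h1
  · exact Or.inl h1
  · exact Or.inr (Or.inl (congrArg Subtype.val h1))
  · exact Or.inr (Or.inr h1)

private theorem sh_root (h : IsSHGroup A s) : (∀ y : A, ¬ s y 0) ∧ ∀ y : A, y ≠ 0 → s 0 y := by
  obtain ⟨r, -, hrmin⟩ := (sh_wf h).has_min Set.univ ⟨0, trivial⟩
  have hrmin' : ∀ x, ¬ s x r := fun x hx => hrmin x trivial hx
  have hroot : ∀ y, y ≠ r → s r y := by
    intro y hy
    by_contra hry
    obtain ⟨z, hz, -⟩ := (h.lexBin.lex r y (Ne.symm hy)).1 ⟨hry, fun hyx => hrmin' y hyx⟩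
    exact hrmin' z hz
  have hrr : r + r = r := by
    by_contra hne
    have h1 : s (r + r) r := by
      refine (h.add_eq r r).2.2 r (Ne.symm hne) ?_ ?_
      · intro l hl
        rcases hl with ⟨x', hx', rfl⟩ | ⟨x', hx', rfl⟩ <;> exact absurd hx'.1 (hrmin' x')
      · intro z hz
        rcases hz with ⟨x', hx', rfl⟩ | ⟨x', hx', rfl⟩ <;> exact absurd hx'.1 (hrmin' x')
    exact hrmin' _ h1
  have hr0 : r = 0 := add_left_cancel (hrr.trans (add_zero r).symm)
  subst hr0
  exact ⟨hrmin', hroot⟩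

private theorem sh_simplest (h : IsSHGroup A s) (x : A) :
    ∀ y, y ≠ x → (∀ l ∈ Lopts s x, l < y) → (∀ r ∈ Ropts s x, y < r) → s x y := by
  intro y hy hL hR
  by_contra hxy
  have hyx : ¬ s y x := by
    intro hyx
    rcases lt_trichotomy y x with hlt | heq | hgt
    · exact absurd (hL y ⟨hyx, hlt⟩) (lt_irrefl y)
    · exact hy heq
    · exact absurd (hR y ⟨hyx, hgt⟩) (lt_irrefl y)
  obtain ⟨z, hzx, hzy, hbet⟩ := (h.lexBin.lex x y (Ne.symm hy)).1 ⟨hxy, hyx⟩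
  rcases hbet with ⟨h1, h2⟩ | ⟨h1, h2⟩
  · exact lt_asymm h2 (hR z ⟨hzx, h1⟩)
  · exact lt_asymm h1 (hL z ⟨hzx, h2⟩)

private theorem sh_convR (h : IsSHGroup A s) {a e d : A} (h1 : s a e) (h2 : a < e)
    (h3 : s e d) : a < d := by
  have had : s a d := sh_trans h h1 h3
  rcases lt_trichotomy a d with hlt | heq | hgt
  · exact hlt
  · rw [← heq] at had; exact absurd had (sh_irrefl h a)
  · exfalso
    have hfalse := (h.lexBin.lex e d (sh_ne h h3)).2 ⟨a, h1, had, Or.inr ⟨hgt, h2⟩⟩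
    exact hfalse.1 h3

private theorem sh_convL (h : IsSHGroup A s) {a e d : A} (h1 : s a e) (h2 : e < a)
    (h3 : s e d) : d < a := by
  have had : s a d := sh_trans h h1 h3
  rcases lt_trichotomy d a with hlt | heq | hgt
  · exact hlt
  · rw [heq] at had; exact absurd had (sh_irrefl h a)
  · exfalso
    have hfalse := (h.lexBin.lex e d (sh_ne h h3)).2 ⟨a, h1, had, Or.inl ⟨h2, hgt⟩⟩
    exact hfalse.1 h3

private theorem sh_zero_O (h : IsSHGroup A s) : Ropts s (0 : A) = ∅ :=
  Set.eq_empty_iff_forall_notMem.2 fun a ha => (sh_root h).1 a ha.1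

private theorem sh_O_nonneg (h : IsSHGroup A s) {b : A} (hb : Ropts s b = ∅) : 0 ≤ b := by
  by_contra hneg
  push_neg at hneg
  have h0b : s 0 b := (sh_root h).2 b (ne_of_lt hneg)
  exact Set.eq_empty_iff_forall_notMem.1 hb 0 ⟨h0b, hneg⟩

private theorem sh_pred_O (h : IsSHGroup A s) {b : A} (hb : Ropts s b = ∅) {e : A}
    (he : s e b) : Ropts s e = ∅ ∧ e < b := by
  have heb : e < b := by
    rcases lt_trichotomy e b with hlt | heq | hgt
    · exact hlt
    · rw [heq] at he; exact absurd he (sh_irrefl h b)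
    · exact absurd ⟨he, hgt⟩ (Set.eq_empty_iff_forall_notMem.1 hb e)
  refine ⟨Set.eq_empty_iff_forall_notMem.2 fun a ha => ?_, heb⟩
  obtain ⟨hae, hea⟩ := ha
  have hab : s a b := sh_trans h hae he
  have haltb : a < b := by
    rcases lt_trichotomy a b with hlt | heq | hgt
    · exact hlt
    · rw [heq] at hab; exact absurd hab (sh_irrefl h b)
    · exact absurd ⟨hab, hgt⟩ (Set.eq_empty_iff_forall_notMem.1 hb a)
  exact lt_asymm haltb (sh_convL h hae hea he)

private theorem sh_O_chain (h : IsSHGroup A s) {e b : A} (he : Ropts s e = ∅)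
    (hb : Ropts s b = ∅) (hlt : e < b) : s e b := by
  by_contra heb
  have hbe : ¬ s b e := fun hbe => lt_asymm hlt (sh_pred_O h he hbe).2
  obtain ⟨z, hze, hzb, hbet⟩ := (h.lexBin.lex e b (ne_of_lt hlt)).1 ⟨heb, hbe⟩
  rcases hbet with ⟨h1, h2⟩ | ⟨h1, h2⟩
  · exact Set.eq_empty_iff_forall_notMem.1 he z ⟨hze, h1⟩
  · exact lt_asymm hlt (h1.trans h2)

private theorem sh_O_add (h : IsSHGroup A s) {b c : A} (hb : Ropts s b = ∅)
    (hc : Ropts s c = ∅) : Ropts s (b + c) = ∅ := by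
  refine Set.eq_empty_iff_forall_notMem.2 fun a ha => ?_
  obtain ⟨hab, hlt⟩ := ha
  have hsba : s (b + c) a := by
    refine (h.add_eq b c).2.2 a (sh_ne h hab) ?_ ?_
    · intro l hl
      rcases hl with ⟨x', hx', rfl⟩ | ⟨y', hy', rfl⟩
      · exact lt_trans (add_lt_add_left hx'.2 c) hlt
      · exact lt_trans (add_lt_add_right hy'.2 b) hlt
    · intro z hz
      rcases hz with ⟨x'', hx'', rfl⟩ | ⟨y'', hy'', rfl⟩
      · rw [hb] at hx''; exact hx''.elim
      · rw [hc] at hy''; exact hy''.elim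
  exact sh_irrefl h a (sh_trans h hab hsba)

private theorem sh_O_simplest (h : IsSHGroup A s) {b : A} (hb : Ropts s b = ∅) :
    ∀ y, y ≠ b → (∀ e, s e b → e < y) → s b y := by
  intro y hy hL
  refine sh_simplest h b y hy (fun l hl => hL l hl.1) (fun r hr => ?_)
  rw [hb] at hr; exact hr.elim

private theorem sh_neg_pred (h : IsSHGroup A s) :
    ∀ x : A, (∀ u, s u x → s (-u) (-x)) ∧ (∀ w, s w (-x) → s (-w) x) := by
  intro x
  refine (sh_wf h).induction
    (C := fun x => (∀ u, s u x → s (-u) (-x)) ∧ ∀ w, s w (-x) → s (-w) x) x ?_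
  intro x IH
  have part1 : ∀ u, s u x → s (-u) (-x) := by
    intro u hux
    have hne : (-u : A) ≠ -x := fun hh => sh_ne h hux (neg_injective hh)
    by_contra hnux
    have hnxu : ¬ s (-x) (-u) := by
      intro hxu
      have hxu' := (IH u hux).2 (-x) hxu
      rw [neg_neg] at hxu'
      exact sh_irrefl h u (sh_trans h hux hxu')
    obtain ⟨z, hz1, hz2, hbet⟩ := (h.lexBin.lex (-u) (-x) hne).1 ⟨hnux, hnxu⟩
    have hzv := (IH u hux).2 z hz1
    have hvx : s (-z) x := sh_trans h hzv hux
    rcases hbet with ⟨h1, h2⟩ | ⟨h1, h2⟩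
    · -- -u < z, z < -x : x < -z, -z < u
      have hb1 : x < -z := lt_neg.1 h2
      have hb2 : -z < u := neg_lt.1 h1
      exact ((h.lexBin.lex u x (sh_ne h hux)).2 ⟨-z, hzv, hvx, Or.inr ⟨hb1, hb2⟩⟩).1 hux
    · -- -x < z, z < -u : u < -z, -z < x
      have hb1 : u < -z := lt_neg.1 h2
      have hb2 : -z < x := neg_lt.1 h1
      exact ((h.lexBin.lex u x (sh_ne h hux)).2 ⟨-z, hzv, hvx, Or.inl ⟨hb1, hb2⟩⟩).1 hux
  refine ⟨part1, ?_⟩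
  by_contra hW
  push_neg at hW
  obtain ⟨w₀, hw₀, hw₀'⟩ := hW
  obtain ⟨w, ⟨hw1, hw2⟩, hwmin⟩ :=
    (sh_wf h).has_min {w | s w (-x) ∧ ¬ s (-w) x} ⟨w₀, hw₀, hw₀'⟩
  have ha : ∀ u, s u x → s (-u) w := by
    intro u hux
    have h1 : s (-u) (-x) := part1 u hux
    rcases sh_pred_tri h h1 hw1 with hh | hh | hh
    · exact hh
    · exfalso; apply hw2; rw [← hh, neg_neg]; exact hux
    · exfalso
      have h2 := (IH u hux).2 w hh
      exact hw2 (sh_trans h h2 hux)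
  have hbex : ∀ z, s z w → ∃ u, s u x ∧ z = -u := by
    intro z hzw
    have hzx : s z (-x) := sh_trans h hzw hw1
    by_cases hzx2 : s (-z) x
    · exact ⟨-z, hzx2, (neg_neg z).symm⟩
    · exact absurd hzw (hwmin z ⟨hzx, hzx2⟩)
  have hsideL : ∀ u, s u x → u < x → w < -u := by
    intro u hux hult
    have h1 : s (-u) w := ha u hux
    rcases lt_trichotomy w (-u) with hlt | heq | hgt
    · exact hlt
    · exfalso; rw [heq] at h1; exact sh_irrefl h (-u) h1
    · exfalso
      have h2 := sh_convR h h1 hgt hw1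
      exact lt_asymm hult (neg_lt_neg_iff.1 h2)
  have hsideR : ∀ u, s u x → x < u → -u < w := by
    intro u hux hult
    have h1 : s (-u) w := ha u hux
    rcases lt_trichotomy (-u) w with hlt | heq | hgt
    · exact hlt
    · exfalso; rw [← heq] at h1; exact sh_irrefl h (-u) h1
    · exfalso
      have h2 := sh_convL h h1 hgt hw1
      exact lt_asymm hult (neg_lt_neg_iff.1 h2)
  have hwnx : w ≠ -x := sh_ne h hw1
  have hxw0 : x + w ≠ 0 := fun hh => hwnx (eq_neg_of_add_eq_zero_right hh)
  have hs0 : s (x + w) 0 := by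
    refine (h.add_eq x w).2.2 0 (Ne.symm hxw0) ?_ ?_
    · intro l hl
      rcases hl with ⟨x', hx', rfl⟩ | ⟨w', hw', rfl⟩
      · have h1 := hsideL x' hx'.1 hx'.2
        have h2 := add_lt_add_right h1 x'
        rwa [add_neg_cancel] at h2
      · obtain ⟨u, hux, rfl⟩ := hbex w' hw'.1
        have hxu : x < u := by
          rcases lt_trichotomy u x with hlt | heq | hgt
          · exact absurd hw'.2 (lt_asymm (hsideL u hux hlt))
          · exfalso; rw [heq] at hux; exact sh_irrefl h x hux
          · exact hgt
        rw [← sub_eq_add_neg]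
        exact sub_neg.2 hxu
    · intro z hz
      rcases hz with ⟨x'', hx'', rfl⟩ | ⟨w'', hw'', rfl⟩
      · have h1 := hsideR x'' hx''.1 hx''.2
        have h2 := add_lt_add_right h1 x''
        rwa [add_neg_cancel] at h2
      · obtain ⟨u, hux, rfl⟩ := hbex w'' hw''.1
        have hxu : u < x := by
          rcases lt_trichotomy u x with hlt | heq | hgt
          · exact hlt
          · exfalso; rw [heq] at hux; exact sh_irrefl h x hux
          · exact absurd hw''.2 (lt_asymm (hsideR u hux hgt))
        rw [← sub_eq_add_neg]
        exact sub_pos.2 hxu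
  exact (sh_root h).1 (x + w) hs0

private theorem sh_neg_s (h : IsSHGroup A s) {u x : A} (hux : s u x) : s (-u) (-x) :=
  (sh_neg_pred h x).1 u hux

private theorem sh_predR_le (h : IsSHGroup A s) {x y b : A} (hyx : s y x) (hxy : x < y)
    (hb : Ropts s b = ∅) (hxb : x < b) : y ≤ b := by
  by_contra hby
  push_neg at hby
  have hsby : s b y := sh_O_simplest h hb y (ne_of_gt hby)
    (fun e he => lt_trans (sh_pred_O h hb he).2 hby)
  exact lt_asymm hxb (sh_convR h hsby hby hyx)

private theorem sh_predL_ge (h : IsSHGroup A s) {x y b : A} (hyx : s y x) (hxy : y < x)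
    (hb : Ropts s b = ∅) (hxb : -b < x) : -b ≤ y := by
  by_contra hyb
  push_neg at hyb
  have hsnb : s (-b) y := by
    refine sh_simplest h (-b) y (ne_of_lt hyb) ?_ ?_
    · intro l hl
      exfalso
      have h1 : s (-l) b := by
        have := sh_neg_s h hl.1
        rwa [neg_neg] at this
      have h2 : -l < b := (sh_pred_O h hb h1).2
      have h3 : b < -l := lt_neg.1 hl.2
      exact lt_asymm h2 h3
    · intro z hz
      exact lt_trans hyb hz.2
  exact lt_asymm hxb (sh_convL h hsnb hyb hyx)

private theorem sh_O_cofinal (h : IsSHGroup A s) [Nontrivial A] (x : A) :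
    ∃ b, Ropts s b = ∅ ∧ x < b := by
  obtain ⟨p, hp⟩ := exists_ne (0 : A)
  have hpos : 0 < |p| := abs_pos.2 hp
  obtain ⟨m, hm, hmin⟩ := (sh_wf h).has_min {y | x < y} ⟨x + |p|, lt_add_of_pos_right x hpos⟩
  exact ⟨m, Set.eq_empty_iff_forall_notMem.2 fun a ha => hmin a (lt_trans hm ha.2) ha.1, hm⟩

end SHLemmas


section TypeinPart

open Ordinal

variable {A : Type u} [AddCommGroup A] [LinearOrder A] [IsOrderedAddMonoid A] {s : A → A → Prop}
variable [inst : IsWellOrder {x : A | Ropts s x = ∅} fun a b => (a : A) < (b : A)]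

private theorem sh_typein_add_le_aux (h : IsSHGroup A s) :
    ∀ (o : Ordinal) (b c : {x : A | Ropts s x = ∅}),
      Ordinal.typein (fun a b : {x : A | Ropts s x = ∅} => (a : A) < (b : A)) b ♯
        Ordinal.typein (fun a b : {x : A | Ropts s x = ∅} => (a : A) < (b : A)) c = o →
      Ordinal.typein (fun a b : {x : A | Ropts s x = ∅} => (a : A) < (b : A))
        ⟨b.1 + c.1, sh_O_add h b.2 c.2⟩ ≤ o := by
  set r := fun a b : {x : A | Ropts s x = ∅} => (a : A) < (b : A) with hrdef
  intro o
  induction o using Ordinal.induction with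
  | _ o IHo =>
  intro b c hoeq
  by_contra hlt
  push_neg at hlt
  obtain ⟨e, he⟩ := Ordinal.typein_surj r (lt_trans hlt (Ordinal.typein_lt_type r _))
  have heb : (e : A) < b.1 + c.1 := by
    have := (Ordinal.typein_lt_typein r (a := e)
      (b := ⟨b.1 + c.1, sh_O_add h b.2 c.2⟩)).1 (by rw [he]; exact hlt)
    exact this
  have hcore : (∃ b' : {x : A | Ropts s x = ∅}, (b' : A) < b.1 ∧ (e : A) ≤ b'.1 + c.1) ∨
      (∃ c' : {x : A | Ropts s x = ∅}, (c' : A) < c.1 ∧ (e : A) ≤ b.1 + c'.1) := by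
    by_contra hnc
    push_neg at hnc
    obtain ⟨h1, h2⟩ := hnc
    have hse : s (b.1 + c.1) e.1 := by
      refine (h.add_eq b.1 c.1).2.2 e.1 (ne_of_lt heb) ?_ ?_
      · intro l hl
        rcases hl with ⟨x', hx', rfl⟩ | ⟨y', hy', rfl⟩
        · exact h1 ⟨x', (sh_pred_O h b.2 hx'.1).1⟩ hx'.2
        · exact h2 ⟨y', (sh_pred_O h c.2 hy'.1).1⟩ hy'.2
      · intro z hz
        rcases hz with ⟨x'', hx'', rfl⟩ | ⟨y'', hy'', rfl⟩
        · have hbO : Ropts s (b : A) = ∅ := b.2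
          rw [hbO] at hx''; exact hx''.elim
        · have hcO : Ropts s (c : A) = ∅ := c.2
          rw [hcO] at hy''; exact hy''.elim
    exact lt_asymm heb (sh_pred_O h e.2 hse).2
  rcases hcore with ⟨b', hb'lt, hb'le⟩ | ⟨c', hc'lt, hc'le⟩
  · have hsmaller : Ordinal.typein r b' ♯ Ordinal.typein r c < o := by
      rw [← hoeq]
      exact nadd_lt_nadd_right ((Ordinal.typein_lt_typein r).2 hb'lt) _
    have hIH := IHo _ hsmaller b' c rfl
    have hmono : Ordinal.typein r e ≤
        Ordinal.typein r ⟨b'.1 + c.1, sh_O_add h b'.2 c.2⟩ :=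
      (Ordinal.typein_le_typein r).2 (not_lt.2 hb'le)
    have : o < o := by
      calc o = Ordinal.typein r e := he.symm
        _ ≤ _ := hmono
        _ ≤ Ordinal.typein r b' ♯ Ordinal.typein r c := hIH
        _ < o := hsmaller
    exact lt_irrefl o this
  · have hsmaller : Ordinal.typein r b ♯ Ordinal.typein r c' < o := by
      rw [← hoeq]
      exact nadd_lt_nadd_left ((Ordinal.typein_lt_typein r).2 hc'lt) _
    have hIH := IHo _ hsmaller b c' rfl
    have hmono : Ordinal.typein r e ≤
        Ordinal.typein r ⟨b.1 + c'.1, sh_O_add h b.2 c'.2⟩ :=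
      (Ordinal.typein_le_typein r).2 (not_lt.2 hc'le)
    have : o < o := by
      calc o = Ordinal.typein r e := he.symm
        _ ≤ _ := hmono
        _ ≤ Ordinal.typein r b ♯ Ordinal.typein r c' := hIH
        _ < o := hsmaller
    exact lt_irrefl o this

private theorem sh_typein_add_le (h : IsSHGroup A s) (b c : {x : A | Ropts s x = ∅}) :
    Ordinal.typein (fun a b : {x : A | Ropts s x = ∅} => (a : A) < (b : A))
        ⟨b.1 + c.1, sh_O_add h b.2 c.2⟩ ≤
      Ordinal.typein (fun a b : {x : A | Ropts s x = ∅} => (a : A) < (b : A)) b ♯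
        Ordinal.typein (fun a b : {x : A | Ropts s x = ∅} => (a : A) < (b : A)) c :=
  sh_typein_add_le_aux h _ b c rfl

private theorem sh_typein_add_ge (h : IsSHGroup A s) (b c : {x : A | Ropts s x = ∅}) :
    Ordinal.typein (fun a b : {x : A | Ropts s x = ∅} => (a : A) < (b : A)) b +
        Ordinal.typein (fun a b : {x : A | Ropts s x = ∅} => (a : A) < (b : A)) c ≤
      Ordinal.typein (fun a b : {x : A | Ropts s x = ∅} => (a : A) < (b : A))
        ⟨b.1 + c.1, sh_O_add h b.2 c.2⟩ := by
  set r := fun a b : {x : A | Ropts s x = ∅} => (a : A) < (b : A) with hrdef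
  set bc : {x : A | Ropts s x = ∅} := ⟨b.1 + c.1, sh_O_add h b.2 c.2⟩ with hbcdef
  rw [← Ordinal.type_subrel r b, ← Ordinal.type_subrel r c, ← Ordinal.type_subrel r bc,
    ← Ordinal.type_sum_lex]
  refine Ordinal.type_le_iff'.2 ⟨?_⟩
  have hcnn : (0 : A) ≤ c.1 := sh_O_nonneg h c.2
  have hbnn : (0 : A) ≤ b.1 := sh_O_nonneg h b.2
  refine RelEmbedding.ofMonotone
    (Sum.elim
      (fun e => ⟨e.1, lt_of_lt_of_le e.2 (le_add_of_nonneg_right hcnn)⟩)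
      (fun f => ⟨⟨b.1 + f.1.1, sh_O_add h b.2 f.1.2⟩, add_lt_add_right f.2 b.1⟩))
    ?_
  intro a₁ a₂ hlex
  cases hlex with
  | inl h' => exact h'
  | inr h' => exact add_lt_add_right h' b.1
  | sep u v => exact lt_of_lt_of_le u.2 (le_add_of_nonneg_right (sh_O_nonneg h v.1.2))

end TypeinPart

/-- The nontrivial initial convex subgroups of a (nontrivial) `ω^φ`-Archimedean
s-hierarchical ordered group `A` are exactly the sets
`A[λ] = {x : ∃ b ∈ On(A), (order type of {c ∈ On(A) : c < b}) < λ and -b < x < b}`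
for infinite additively indecomposable ordinals `λ ≤ ω^φ`. -/
theorem stmt3 {A : Type u} [AddCommGroup A] [LinearOrder A] [IsOrderedAddMonoid A] [Nontrivial A]
    (s : A → A → Prop) (h : IsSHGroup A s)
    (hwo : IsWellOrder {x : A | Ropts s x = ∅} (fun a b => (a : A) < (b : A)))
    (φ : Ordinal)
    (htype : @Ordinal.type {x : A | Ropts s x = ∅} (fun a b => (a : A) < (b : A)) hwo =
      Ordinal.omega0 ^ φ)
    (K : Set A) :
    (IsSubgroupSet K ∧ (∃ x ∈ K, x ≠ 0) ∧ IsConvexSet K ∧ IsInitialSubtree s K) ↔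
      ∃ lam : Ordinal, Ordinal.omega0 ≤ lam ∧
        (∀ μ ν : Ordinal, μ < lam → ν < lam → μ + ν < lam) ∧
        lam ≤ Ordinal.omega0 ^ φ ∧
        K = {x : A | ∃ b : {x : A | Ropts s x = ∅},
          @Ordinal.typein {x : A | Ropts s x = ∅} (fun a b => (a : A) < (b : A)) hwo b < lam ∧
          -(b : A) < x ∧ x < (b : A)} := by
  haveI := hwo
  set r : {x : A | Ropts s x = ∅} → {x : A | Ropts s x = ∅} → Prop :=
    fun a b => (a : A) < (b : A) with hrdef
  constructor
  · rintro ⟨⟨h0K, haddK, hnegK⟩, ⟨x₀, hx₀K, hx₀⟩, hconv, hinit⟩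
    have hpK : ∃ p ∈ K, 0 < p := by
      rcases abs_choice x₀ with hh | hh
      · exact ⟨|x₀|, by rw [hh]; exact hx₀K, abs_pos.2 hx₀⟩
      · exact ⟨|x₀|, by rw [hh]; exact hnegK x₀ hx₀K, abs_pos.2 hx₀⟩
    obtain ⟨p, hpKmem, hppos⟩ := hpK
    have keyK : ∀ z ∈ K, ∃ b : {x : A | Ropts s x = ∅}, (b : A) ∈ K ∧ z < (b : A) := by
      intro z hz
      obtain ⟨m, ⟨hmK, hmz⟩, hmin⟩ := (sh_wf h).has_min {y | y ∈ K ∧ z < y}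
        ⟨z + p, haddK z hz p hpKmem, lt_add_of_pos_right z hppos⟩
      have hmO : Ropts s m = ∅ := Set.eq_empty_iff_forall_notMem.2 fun a ha =>
        hmin a ⟨hinit m hmK a ha.1, lt_trans hmz ha.2⟩ ha.1
      exact ⟨⟨m, hmO⟩, hmK, hmz⟩
    set Λ : Set Ordinal :=
      (fun b : {x : A | Ropts s x = ∅} => Ordinal.typein r b + 1) ''
        {b : {x : A | Ropts s x = ∅} | (b : A) ∈ K} with hLdef
    have hΛne : Λ.Nonempty := by
      obtain ⟨b, hbK, -⟩ := keyK 0 h0K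
      exact ⟨_, ⟨b, hbK, rfl⟩⟩
    have hΛbdd : BddAbove Λ := by
      refine ⟨Ordinal.type r, ?_⟩
      rintro o ⟨b, -, rfl⟩
      dsimp only
      rw [Ordinal.add_one_eq_succ]
      exact Order.succ_le_of_lt (Ordinal.typein_lt_type r b)
    have hkey : ∀ b : {x : A | Ropts s x = ∅},
        (b : A) ∈ K ↔ Ordinal.typein r b < sSup Λ := by
      intro b
      constructor
      · intro hbK
        have h1 : Ordinal.typein r b + 1 ≤ sSup Λ := le_csSup hΛbdd ⟨b, hbK, rfl⟩
        refine lt_of_lt_of_le ?_ h1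
        rw [Ordinal.add_one_eq_succ]
        exact Order.lt_succ _
      · intro hb
        obtain ⟨o, ⟨c, hcK, rfl⟩, hlt⟩ := exists_lt_of_lt_csSup hΛne hb
        have hlt' : Ordinal.typein r b < Ordinal.typein r c + 1 := hlt
        have h1 : Ordinal.typein r b ≤ Ordinal.typein r c := by
          rw [Ordinal.add_one_eq_succ, Order.lt_succ_iff] at hlt'; exact hlt'
        have hble : (b : A) ≤ (c : A) := not_lt.1 ((Ordinal.typein_le_typein r).1 h1)
        exact hconv 0 h0K (c : A) hcK (b : A) (sh_O_nonneg h b.2) hble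
    obtain ⟨b₁, hb₁K, hb₁pos⟩ := keyK 0 h0K
    have hfex : ∀ n : ℕ, ∃ b : {x : A | Ropts s x = ∅},
        (b : A) ∈ K ∧ (n : Ordinal) ≤ Ordinal.typein r b := by
      intro n
      induction n with
      | zero => exact ⟨b₁, hb₁K, by simp⟩
      | succ n IH =>
        obtain ⟨b, hbK, hble⟩ := IH
        refine ⟨⟨b.1 + b₁.1, sh_O_add h b.2 b₁.2⟩, haddK _ hbK _ hb₁K, ?_⟩
        have hlt : Ordinal.typein r b <
            Ordinal.typein r ⟨b.1 + b₁.1, sh_O_add h b.2 b₁.2⟩ :=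
          (Ordinal.typein_lt_typein r).2 (lt_add_of_pos_right _ hb₁pos)
        rw [Nat.cast_succ, Ordinal.add_one_eq_succ]
        exact Order.succ_le_of_lt (lt_of_le_of_lt hble hlt)
    have hωlam : Ordinal.omega0 ≤ sSup Λ := by
      rw [Ordinal.omega0_le]
      intro n
      obtain ⟨b, hbK, hble⟩ := hfex n
      exact le_trans hble (le_of_lt ((hkey b).1 hbK))
    have hprin : ∀ μ ν : Ordinal, μ < sSup Λ → ν < sSup Λ → μ + ν < sSup Λ := by
      intro μ ν hμ hν
      obtain ⟨o₁, ⟨b, hbK, rfl⟩, hlt₁⟩ := exists_lt_of_lt_csSup hΛne hμ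
      obtain ⟨o₂, ⟨c, hcK, rfl⟩, hlt₂⟩ := exists_lt_of_lt_csSup hΛne hν
      have hlt₁' : μ < Ordinal.typein r b + 1 := hlt₁
      have hlt₂' : ν < Ordinal.typein r c + 1 := hlt₂
      have hμ' : μ ≤ Ordinal.typein r b := by
        rw [Ordinal.add_one_eq_succ, Order.lt_succ_iff] at hlt₁'; exact hlt₁'
      have hν' : ν ≤ Ordinal.typein r c := by
        rw [Ordinal.add_one_eq_succ, Order.lt_succ_iff] at hlt₂'; exact hlt₂'
      have hdK : ((⟨b.1 + c.1, sh_O_add h b.2 c.2⟩ : {x : A | Ropts s x = ∅}) : A) ∈ K :=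
        haddK _ hbK _ hcK
      calc μ + ν ≤ Ordinal.typein r b + Ordinal.typein r c := add_le_add hμ' hν'
        _ ≤ Ordinal.typein r ⟨b.1 + c.1, sh_O_add h b.2 c.2⟩ := sh_typein_add_ge h b c
        _ < sSup Λ := (hkey _).1 hdK
    have hle : sSup Λ ≤ Ordinal.omega0 ^ φ := by
      rw [← htype]
      refine csSup_le hΛne ?_
      rintro o ⟨b, -, rfl⟩
      dsimp only
      rw [Ordinal.add_one_eq_succ]
      exact Order.succ_le_of_lt (Ordinal.typein_lt_type r b)
    have hKeq : K = {x : A | ∃ b : {x : A | Ropts s x = ∅},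
        Ordinal.typein r b < sSup Λ ∧ -(b : A) < x ∧ x < (b : A)} := by
      ext x
      constructor
      · intro hxK
        have hq : max x (-x) ∈ K := by
          rcases max_choice x (-x) with hh | hh <;> rw [hh]
          · exact hxK
          · exact hnegK x hxK
        obtain ⟨b, hbK, hbgt⟩ := keyK _ hq
        refine ⟨b, (hkey b).1 hbK, ?_, ?_⟩
        · exact neg_lt.1 (lt_of_le_of_lt (le_max_right _ _) hbgt)
        · exact lt_of_le_of_lt (le_max_left _ _) hbgt
      · rintro ⟨b, hblt, h1, h2⟩
        have hbK : (b : A) ∈ K := (hkey b).2 hblt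
        exact hconv (-(b : A)) (hnegK _ hbK) (b : A) hbK x h1.le h2.le
    exact ⟨sSup Λ, hωlam, hprin, hle, hKeq⟩
  · rintro ⟨lam, hωlam, hprin, hlam_le, rfl⟩
    have hsurj : ∀ o : Ordinal, o < lam →
        ∃ b : {x : A | Ropts s x = ∅}, Ordinal.typein r b = o := by
      intro o ho
      have h1 : o < Ordinal.type r := by
        have h2 : o < Ordinal.omega0 ^ φ := lt_of_lt_of_le ho hlam_le
        rw [← htype] at h2
        exact h2
      obtain ⟨b, hb⟩ := Ordinal.typein_surj r h1
      exact ⟨b, hb⟩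
    have hone : (1 : Ordinal) < lam := lt_of_lt_of_le Ordinal.one_lt_omega0 hωlam
    obtain ⟨b₁, hb₁⟩ := hsurj 1 hone
    have hb₁lam : Ordinal.typein r b₁ < lam := by rw [hb₁]; exact hone
    have hb₁pos : (0 : A) < b₁.1 := by
      rcases lt_or_eq_of_le (sh_O_nonneg h b₁.2) with hlt | heq
      · exact hlt
      · exfalso
        obtain ⟨b₀, hb₀⟩ := hsurj 0 (lt_trans zero_lt_one hone)
        have h1 : Ordinal.typein r b₀ < Ordinal.typein r b₁ := by
          rw [hb₀, hb₁]; exact zero_lt_one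
        have hblt : (b₀ : A) < (b₁ : A) := (Ordinal.typein_lt_typein r).1 h1
        rw [← heq] at hblt
        exact absurd hblt (not_lt.2 (sh_O_nonneg h b₀.2))
    have hclo : ∀ b c : {x : A | Ropts s x = ∅}, Ordinal.typein r b < lam →
        Ordinal.typein r c < lam →
        Ordinal.typein r ⟨b.1 + c.1, sh_O_add h b.2 c.2⟩ < lam := fun b c hb hc =>
      lt_of_le_of_lt (sh_typein_add_le h b c) (nadd_lt_of_add_principal hωlam hprin hb hc)
    refine ⟨⟨?_, ?_, ?_⟩, ?_, ?_, ?_⟩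
    · exact ⟨b₁, hb₁lam, neg_lt_zero.2 hb₁pos, hb₁pos⟩
    · rintro x ⟨b, hb, hxb1, hxb2⟩ y ⟨c, hc, hyc1, hyc2⟩
      refine ⟨⟨b.1 + c.1, sh_O_add h b.2 c.2⟩, hclo b c hb hc, ?_, ?_⟩
      · have h1 := add_lt_add hxb1 hyc1
        rwa [← neg_add] at h1
      · exact add_lt_add hxb2 hyc2
    · rintro x ⟨b, hb, hxb1, hxb2⟩
      exact ⟨b, hb, neg_lt_neg hxb2, neg_lt.2 hxb1⟩
    · refine ⟨b₁.1, ⟨⟨b₁.1 + b₁.1, sh_O_add h b₁.2 b₁.2⟩, hclo b₁ b₁ hb₁lam hb₁lam,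
        ?_, lt_add_of_pos_left _ hb₁pos⟩, ne_of_gt hb₁pos⟩
      calc -(b₁.1 + b₁.1) < 0 := neg_lt_zero.2 (add_pos hb₁pos hb₁pos)
        _ < b₁.1 := hb₁pos
    · rintro x ⟨b, hb, hxb1, hxb2⟩ y ⟨c, hc, hyc1, hyc2⟩ z hxz hzy
      refine ⟨⟨b.1 + c.1, sh_O_add h b.2 c.2⟩, hclo b c hb hc, ?_, ?_⟩
      · have h1 : -(b.1 + c.1) ≤ -b.1 := by
          rw [neg_add]
          exact add_le_of_nonpos_right (neg_nonpos.2 (sh_O_nonneg h c.2))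
        exact lt_of_le_of_lt h1 (lt_of_lt_of_le hxb1 hxz)
      · exact lt_of_le_of_lt hzy
          (lt_of_lt_of_le hyc2 (le_add_of_nonneg_left (sh_O_nonneg h b.2)))
    · rintro x ⟨b, hb, hxb1, hxb2⟩ y hyx
      have hbpos : (0 : A) < b.1 := by
        have hcon := lt_trans hxb1 hxb2
        by_contra hnp
        push_neg at hnp
        exact absurd hcon (not_lt.2 (le_trans hnp (neg_nonneg.2 hnp)))
      have hdlam := hclo b b hb hb
      have hstep : (b : A) < b.1 + b.1 := lt_add_of_pos_right _ hbpos
      rcases lt_trichotomy y x with hlt | heq | hgt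
      · have hge := sh_predL_ge h hyx hlt b.2 hxb1
        refine ⟨⟨b.1 + b.1, sh_O_add h b.2 b.2⟩, hdlam, ?_, ?_⟩
        · exact lt_of_lt_of_le (neg_lt_neg hstep) hge
        · exact lt_trans (lt_trans hlt hxb2) hstep
      · exfalso; rw [heq] at hyx; exact sh_irrefl h x hyx
      · have hle := sh_predR_le h hyx hgt b.2 hxb2
        refine ⟨⟨b.1 + b.1, sh_O_add h b.2 b.2⟩, hdlam, ?_, ?_⟩
        · exact lt_trans (lt_trans (neg_lt_neg hstep) hxb1) hgt
        · exact lt_of_le_of_lt hle hstep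
end

section
/- Let A be an s-hierarchical ordered group. Then A is discrete (i.e., the set of positive elements of A has a least member) if and only if there exists g ∈ A such that L_s(g) = {0} and g has no immediate left successor in A, i.e., there is no y ∈ A with g <_s y, y < g, and ρ(y) = ρ(g) + 1. Moreover, any such g is the least positive element of A. -/
universe u

section AuxSH

universe v
variable {α : Type v}

theorem ne_of_s {s : α → α → Prop} (ht : IsTreeOrd s) {a b : α} (hab : s a b) : a ≠ b :=
  fun h => ht.irrefl b (h ▸ hab)

theorem rank_eq_typein {s : α → α → Prop} (ht : IsTreeOrd s) {x z : α} (hz : s z x) :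
    treeRank s ht z =
      @Ordinal.typein (treePred s x) (fun a b => s a.1 b.1) (ht.predWO x) ⟨z, hz⟩ := by
  haveI := ht.predWO x
  haveI := ht.predWO z
  rw [← Ordinal.type_subrel]
  unfold treeRank
  exact RelIso.ordinal_type_eq
    ⟨⟨fun u => ⟨⟨u.1, ht.trans u.2 hz⟩, u.2⟩, fun v => ⟨v.1.1, v.2⟩,
      fun u => rfl, fun v => rfl⟩, Iff.rfl⟩

theorem rank_lt_of_s {s : α → α → Prop} (ht : IsTreeOrd s) {z x : α} (hz : s z x) :
    treeRank s ht z < treeRank s ht x := by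
  haveI := ht.predWO x
  rw [rank_eq_typein ht hz]
  exact Ordinal.typein_lt_type _ _

theorem rank_succ_of_no_between {s : α → α → Prop} (ht : IsTreeOrd s) {g w : α}
    (hgw : s g w) (hno : ∀ u, s g u → ¬ s u w) :
    treeRank s ht w = treeRank s ht g + 1 := by
  haveI := ht.predWO w
  have h1 : treeRank s ht g < treeRank s ht w := rank_lt_of_s ht hgw
  have h2 : treeRank s ht g + 1 ≤ treeRank s ht w := by
    rw [Ordinal.add_one_eq_succ, Order.succ_le_iff]; exact h1
  refine le_antisymm ?_ h2
  by_contra hlt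
  push_neg at hlt
  have hlt' : treeRank s ht g + 1 <
      @Ordinal.type (treePred s w) (fun a b => s a.1 b.1) (ht.predWO w) := hlt
  obtain ⟨u, hu⟩ := Ordinal.typein_surj (fun a b : treePred s w => s a.1 b.1) hlt'
  have hgu : (fun a b : treePred s w => s a.1 b.1) ⟨g, hgw⟩ u := by
    have hlt2 : @Ordinal.typein _ (fun a b : treePred s w => s a.1 b.1) (ht.predWO w) ⟨g, hgw⟩ <
        @Ordinal.typein _ (fun a b : treePred s w => s a.1 b.1) (ht.predWO w) u := by
      rw [← rank_eq_typein ht hgw,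
        show (@Ordinal.typein _ (fun a b : treePred s w => s a.1 b.1) (ht.predWO w)) u =
          treeRank s ht g + 1 from hu]
      exact lt_add_one _
    exact (Ordinal.typein_lt_typein (r := fun a b : treePred s w => s a.1 b.1)).1 hlt2
  exact hno u.1 hgu u.2

variable [LinearOrder α]

theorem no_between_of_s {s : α → α → Prop} (hl : IsLexBinTree s) {x y z : α}
    (hxy : s x y) (hzx : s z x) (hzy : s z y) :
    ¬ (x < z ∧ z < y ∨ y < z ∧ z < x) := by
  intro hb
  have hne : x ≠ y := ne_of_s hl.toIsBinaryTree.toIsTreeOrd hxy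
  exact ((hl.lex x y hne).2 ⟨z, hzx, hzy, hb⟩).1 hxy

theorem s_of_between {s : α → α → Prop} (hl : IsLexBinTree s) {y w : α}
    (hne : w ≠ y) (hLl : ∀ l ∈ Lopts s y, l < w) (hRr : ∀ r ∈ Ropts s y, w < r) :
    s y w := by
  have ht := hl.toIsBinaryTree.toIsTreeOrd
  by_contra hyw
  have hwy : ¬ s w y := by
    intro hwy
    rcases lt_or_gt_of_ne hne with h | h
    · exact absurd (hLl w ⟨hwy, h⟩) (lt_irrefl w)
    · exact absurd (hRr w ⟨hwy, h⟩) (lt_irrefl w)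
  obtain ⟨z, hzy, hzw, hb⟩ := (hl.lex y w hne.symm).1 ⟨hyw, hwy⟩
  have hzney : z ≠ y := ne_of_s ht hzy
  rcases lt_or_gt_of_ne hzney with h | h
  · have hzlw := hLl z ⟨hzy, h⟩
    rcases hb with ⟨h1, _⟩ | ⟨h1, _⟩
    · exact absurd h1 (not_lt.2 h.le)
    · exact absurd h1 (not_lt.2 hzlw.le)
  · have hwlz := hRr z ⟨hzy, h⟩
    rcases hb with ⟨_, h2⟩ | ⟨_, h2⟩
    · exact absurd h2 (not_lt.2 hwlz.le)
    · exact absurd h2 (not_lt.2 h.le)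

theorem convex_lt {s : α → α → Prop} (hl : IsLexBinTree s) {g w u : α}
    (hgw : s g w) (hwu : s w u) (h1 : w < g) : u < g := by
  have ht := hl.toIsBinaryTree.toIsTreeOrd
  have hgu : s g u := ht.trans hgw hwu
  have hnb := no_between_of_s hl hwu hgw hgu
  have hne : u ≠ g := (ne_of_s ht hgu).symm
  rcases lt_or_gt_of_ne hne with h | h
  · exact h
  · exact absurd (Or.inl ⟨h1, h⟩) hnb

theorem convex_gt {s : α → α → Prop} (hl : IsLexBinTree s) {g w u : α}
    (hgw : s g w) (hwu : s w u) (h1 : g < w) : g < u := by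
  have ht := hl.toIsBinaryTree.toIsTreeOrd
  have hgu : s g u := ht.trans hgw hwu
  have hnb := no_between_of_s hl hwu hgw hgu
  have hne : u ≠ g := (ne_of_s ht hgu).symm
  rcases lt_or_gt_of_ne hne with h | h
  · exact absurd (Or.inr ⟨h, h1⟩) hnb
  · exact h

end AuxSH

section AuxSHGroup

universe w
variable {A : Type w} [AddCommGroup A] [LinearOrder A] [IsOrderedAddMonoid A] {s : A → A → Prop}

theorem zero_root (h : IsSHGroup A s) :
    (∀ u : A, ¬ s u 0) ∧ (∀ x : A, x ≠ 0 → s 0 x) := by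
  have ht := h.lexBin.toIsBinaryTree.toIsTreeOrd
  obtain ⟨r, hr⟩ : ∃ r : A, ∀ u, ¬ s u r := by
    by_cases h0 : ∃ u : A, s u 0
    · obtain ⟨u, hu⟩ := h0
      have hwf := (ht.predWO (0 : A)).wf
      refine ⟨(hwf.min Set.univ ⟨⟨u, hu⟩, trivial⟩).1, fun v hv => ?_⟩
      have hvx : s v 0 := ht.trans hv (hwf.min Set.univ ⟨⟨u, hu⟩, trivial⟩).2
      exact hwf.not_lt_min Set.univ
        (show (⟨v, hvx⟩ : treePred s (0:A)) ∈ Set.univ from trivial) hv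
    · exact ⟨0, fun u hu => h0 ⟨u, hu⟩⟩
  have hsimp := h.add_eq r r
  have hvacL : ∀ y : A, ∀ l ∈ ({z | ∃ x' ∈ Lopts s r, z = x' + r} ∪
      {z | ∃ y' ∈ Lopts s r, z = r + y'} : Set A), l < y := by
    rintro y l (⟨x', hx', rfl⟩ | ⟨y', hy', rfl⟩)
    · exact absurd hx'.1 (hr x')
    · exact absurd hy'.1 (hr y')
  have hvacR : ∀ y : A, ∀ rr ∈ ({z | ∃ x'' ∈ Ropts s r, z = x'' + r} ∪
      {z | ∃ y'' ∈ Ropts s r, z = r + y''} : Set A), y < rr := by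
    rintro y rr (⟨x'', hx'', rfl⟩ | ⟨y'', hy'', rfl⟩)
    · exact absurd hx''.1 (hr x'')
    · exact absurd hy''.1 (hr y'')
  have hrr : r + r = r := by
    by_contra hne
    exact hr (r + r) (hsimp.2.2 r (fun he => hne he.symm) (hvacL r) (hvacR r))
  have hr0 : r = 0 := by
    have := add_eq_left.1 hrr
    exact this
  subst hr0
  refine ⟨hr, fun x hx => ?_⟩
  by_contra h0x
  have hx0 : ¬ s x 0 := hr x
  obtain ⟨z, hz, -⟩ := (h.lexBin.lex 0 x (Ne.symm hx)).1 ⟨h0x, hx0⟩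
  exact hr z hz

theorem g_is_least (h : IsSHGroup A s) (g : A)
    (hg : Lopts s g = {0} ∧
      ¬ ∃ y : A, s g y ∧ y < g ∧
        treeRank s h.lexBin.toIsBinaryTree.toIsTreeOrd y =
          treeRank s h.lexBin.toIsBinaryTree.toIsTreeOrd g + 1) :
    IsLeast {x : A | 0 < x} g := by
  obtain ⟨hL, hno⟩ := hg
  have ht := h.lexBin.toIsBinaryTree.toIsTreeOrd
  have hg0 : (0 : A) < g := by
    have h0 : (0 : A) ∈ Lopts s g := by rw [hL]; exact Set.mem_singleton 0
    exact h0.2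
  refine ⟨hg0, fun x hx => ?_⟩
  by_contra hgx
  push_neg at hgx
  have hx0 : (0 : A) < x := hx
  have hsgx : s g x := by
    refine s_of_between h.lexBin (ne_of_lt hgx) (fun l hl => ?_) (fun rr hrr => ?_)
    · rw [hL] at hl
      rw [hl]
      exact hx0
    · exact hgx.trans hrr.2
  have hwf := (ht.predWO x).wf
  by_cases hT : ∃ u : treePred s x, s g u.1
  · set T : Set (treePred s x) := {u | s g u.1} with hTdef
    have hTne : T.Nonempty := hT
    set w := hwf.min T hTne with hwdef
    have hwT : s g w.1 := hwf.min_mem T hTne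
    have hwx : s w.1 x := w.2
    have hnob : ∀ u, s g u → ¬ s u w.1 := by
      intro u hgu huw
      have hux : s u x := ht.trans huw hwx
      exact hwf.not_lt_min T (show (⟨u, hux⟩ : treePred s x) ∈ T from hgu) huw
    have hrank := rank_succ_of_no_between ht hwT hnob
    have hwg : w.1 < g := by
      have hne : w.1 ≠ g := (ne_of_s ht hwT).symm
      rcases lt_or_gt_of_ne hne with h' | h'
      · exact h'
      · exact absurd (convex_gt h.lexBin hwT hwx h') (not_lt.2 hgx.le)
    exact hno ⟨w.1, hwT, hwg, hrank⟩
  · push_neg at hT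
    have hnob : ∀ u, s g u → ¬ s u x := fun u hgu hux => hT ⟨u, hux⟩ hgu
    exact hno ⟨x, hsgx, hgx, rank_succ_of_no_between ht hsgx hnob⟩

end AuxSHGroup

/-- An s-hierarchical ordered group is discrete iff there is an element `g` whose only
left predecessor is `0` and which has no immediate left successor; moreover, any such
`g` is the least positive element. -/
theorem stmt6 {A : Type u} [AddCommGroup A] [LinearOrder A] [IsOrderedAddMonoid A] (s : A → A → Prop)
    (h : IsSHGroup A s) :
    ((∃ g : A, IsLeast {x : A | 0 < x} g) ↔
      ∃ g : A, Lopts s g = {0} ∧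
        ¬ ∃ y : A, s g y ∧ y < g ∧
          treeRank s h.lexBin.toIsBinaryTree.toIsTreeOrd y =
            treeRank s h.lexBin.toIsBinaryTree.toIsTreeOrd g + 1) ∧
    ∀ g : A, (Lopts s g = {0} ∧
        ¬ ∃ y : A, s g y ∧ y < g ∧
          treeRank s h.lexBin.toIsBinaryTree.toIsTreeOrd y =
            treeRank s h.lexBin.toIsBinaryTree.toIsTreeOrd g + 1) →
      IsLeast {x : A | 0 < x} g := by
  have hmore := fun g hg => g_is_least h g hg
  refine ⟨⟨?_, fun ⟨g, hg⟩ => ⟨g, hmore g hg⟩⟩, hmore⟩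
  rintro ⟨a, ha⟩
  have ht := h.lexBin.toIsBinaryTree.toIsTreeOrd
  obtain ⟨hr0, hroot⟩ := zero_root h
  have ha0 : (0 : A) < a := ha.1
  refine ⟨a, ?_, ?_⟩
  · ext z
    simp only [Lopts, Set.mem_setOf_eq, Set.mem_singleton_iff]
    constructor
    · rintro ⟨hza, hzlt⟩
      by_contra hz0
      rcases lt_trichotomy z 0 with h' | h' | h'
      · exact absurd (convex_lt h.lexBin (hroot z hz0) hza h') (not_lt.2 ha0.le)
      · exact hz0 h'
      · exact absurd hzlt (not_lt.2 (ha.2 h'))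
    · rintro rfl
      exact ⟨hroot a (ne_of_gt ha0), ha0⟩
  · rintro ⟨y, hay, hya, -⟩
    have hy0 : y ≠ 0 := fun hy => hr0 a (hy ▸ hay)
    rcases lt_or_gt_of_ne hy0 with h' | h'
    · exact no_between_of_s h.lexBin hay (hroot a (ne_of_gt ha0)) (hroot y hy0)
        (Or.inr ⟨h', ha0⟩)
    · exact absurd hya (not_lt.2 (ha.2 h'))
end

section
/- Let ⟨A, <, <_s⟩ be a lexicographically ordered binary tree. Then for every x ∈ A, x = {L_s(x) | R_s(x)}; that is, L_s(x) < {x} < R_s(x), and x <_s y for every y ≠ x in A with L_s(x) < {y} < R_s(x). -/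
universe u

/-- Every element of a lexicographically ordered binary tree is the simplest element
lying between its left and right predecessors: `x = {L_s(x) | R_s(x)}`. -/
theorem stmt11 {α : Type u} [LinearOrder α] (s : α → α → Prop)
    (h : IsLexBinTree s) (x : α) :
    IsSimplest s (Lopts s x) (Ropts s x) x := by
  refine ⟨fun l hl => hl.2, fun r hr => hr.2, fun y hy hL hR => ?_⟩
  by_contra hxy
  by_cases hyx : s y x
  · rcases lt_trichotomy y x with h1 | h1 | h1
    · exact lt_irrefl y (hL y ⟨hyx, h1⟩)
    · exact hy h1
    · exact lt_irrefl y (hR y ⟨hyx, h1⟩)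
  · obtain ⟨z, hzx, hzy, hz⟩ := (h.lex x y (fun e => hy e.symm)).1 ⟨hxy, hyx⟩
    rcases hz with ⟨h1, h2⟩ | ⟨h1, h2⟩
    · exact absurd (hR z ⟨hzx, h1⟩) (not_lt.2 h2.le)
    · exact absurd (hL z ⟨hzx, h2⟩) (not_lt.2 h1.le)
end
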